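/- arXiv:2302.12404 — 5 statements merged into one kernel-verified Lean document; each statement's English description precedes it below -/
import Mathlib

section
/- For a Tychonoff space X and directed families α, β of subsets of X, the family α ∨ β := {A ∪ B : A ∈ α, B ∈ β} is directed and the topology C_{α∨β} is the supremum (least upper bound) of {C_α, C_β} in the set of all uniform topologies 𝒰_X ordered by inclusion. -/
open Set TopologicalSpace

/-- The basic set `V(f,A,ε)` of functions uniformly `ε`-close to `f` on `A`. -/
def Vset {X : Type*} [TopologicalSpace X] (f : C(X, ℝ)) (A : Set X) (ε : ℝ) : Set C(X, ℝ) :=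
  {g | ∀ x ∈ A, |f x - g x| < ε}

/-- A nonempty directed family of subsets of `X`. -/
structure DirFam (X : Type*) where
  sets : Set (Set X)
  nonempty : sets.Nonempty
  directed : ∀ A ∈ sets, ∀ B ∈ sets, ∃ E ∈ sets, A ∪ B ⊆ E

/-- The uniform topology `C_γ` on `C(X)` determined by a directed family `γ`. -/
def DirFam.top {X : Type*} [TopologicalSpace X] (γ : DirFam X) : TopologicalSpace C(X, ℝ) where
  IsOpen U := ∀ f ∈ U, ∃ A ∈ γ.sets, ∃ ε > 0, Vset f A ε ⊆ U
  isOpen_univ := by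
    intro f _
    obtain ⟨A, hA⟩ := γ.nonempty
    exact ⟨A, hA, 1, one_pos, Set.subset_univ _⟩
  isOpen_inter := by
    intro U W hU hW f hf
    obtain ⟨A, hA, ε, hε, hAU⟩ := hU f hf.1
    obtain ⟨B, hB, δ, hδ, hBW⟩ := hW f hf.2
    obtain ⟨E, hE, hsub⟩ := γ.directed A hA B hB
    refine ⟨E, hE, min ε δ, lt_min hε hδ, fun g hg => ⟨?_, ?_⟩⟩
    · exact hAU fun x hx =>
        lt_of_lt_of_le (hg x (hsub (Set.mem_union_left _ hx))) (min_le_left _ _)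
    · exact hBW fun x hx =>
        lt_of_lt_of_le (hg x (hsub (Set.mem_union_right _ hx))) (min_le_right _ _)
  isOpen_sUnion := by
    intro S hS f hf
    obtain ⟨U, hU, hfU⟩ := hf
    obtain ⟨A, hA, ε, hε, h⟩ := hS U hU f hfU
    exact ⟨A, hA, ε, hε, h.trans (Set.subset_sUnion_of_mem hU)⟩

/-- The lattice of uniform topologies on `C(X)`. -/
def UX (X : Type*) [TopologicalSpace X] : Set (TopologicalSpace C(X, ℝ)) :=
  {t | ∃ γ : DirFam X, t = γ.top}

/-- `tle s t` means the topology `s` is coarser than or equal to `t`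
(inclusion of topologies, `τ_s ⊆ τ_t`). -/
def tle {X : Type*} [TopologicalSpace X] (s t : TopologicalSpace C(X, ℝ)) : Prop :=
  ∀ U : Set C(X, ℝ), s.IsOpen U → t.IsOpen U

/-- The directed family `{∅}`, generating the indiscrete topology `C_∅`. -/
def cEmptyFam (X : Type*) : DirFam X :=
  ⟨{∅}, Set.singleton_nonempty _, by
    intro A hA B hB
    rw [Set.mem_singleton_iff] at hA hB
    exact ⟨∅, Set.mem_singleton _, by simp [hA, hB]⟩⟩

/-- The directed family `{X}`, generating the uniform-convergence topology `C_u`. -/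
def cUnivFam (X : Type*) : DirFam X :=
  ⟨{Set.univ}, Set.singleton_nonempty _, fun A _ B _ =>
    ⟨Set.univ, Set.mem_singleton _, Set.subset_univ _⟩⟩

/-- The directed family `{{x}}`. -/
def ptFam {X : Type*} (x : X) : DirFam X :=
  ⟨{{x}}, Set.singleton_nonempty _, by
    intro A hA B hB
    rw [Set.mem_singleton_iff] at hA hB
    exact ⟨{x}, Set.mem_singleton _, by simp [hA, hB]⟩⟩

/-- The directed family `{A}`. -/
def setFam {X : Type*} (A : Set X) : DirFam X :=
  ⟨{A}, Set.singleton_nonempty _, by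
    intro B hB E hE
    rw [Set.mem_singleton_iff] at hB hE
    exact ⟨A, Set.mem_singleton _, by simp [hB, hE]⟩⟩

/-- The topology `C_x`. -/
def Cpt {X : Type*} [TopologicalSpace X] (x : X) : TopologicalSpace C(X, ℝ) :=
  (ptFam x).top

/-- The topology `C_A`. -/
def CSet {X : Type*} [TopologicalSpace X] (A : Set X) : TopologicalSpace C(X, ℝ) :=
  (setFam A).top

/-- The pushforward `f*γ = {f[A] : A ∈ γ}` of a directed family along a map. -/
def DirFam.push {X Y : Type*} (f : X → Y) (γ : DirFam X) : DirFam Y :=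
  ⟨(Set.image f) '' γ.sets, γ.nonempty.image _, by
    rintro A ⟨A', hA', rfl⟩ B ⟨B', hB', rfl⟩
    obtain ⟨E, hE, h⟩ := γ.directed A' hA' B' hB'
    exact ⟨f '' E, ⟨E, hE, rfl⟩, by rw [← Set.image_union]; exact fun y ⟨x, hx, hxy⟩ => ⟨x, h hx, hxy⟩⟩⟩


lemma Vset_mono {X : Type*} [TopologicalSpace X] (f : C(X, ℝ)) {A B : Set X} (h : A ⊆ B)
    (ε : ℝ) : Vset f B ε ⊆ Vset f A ε :=
  fun _ hg x hx => hg x (h hx)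

/-- Auxiliary open core of `Vset f A ε`. -/
def Wset {X : Type*} [TopologicalSpace X] (f : C(X, ℝ)) (A : Set X) (ε : ℝ) : Set C(X, ℝ) :=
  {g | ∃ δ > 0, Vset g A δ ⊆ Vset f A ε}

lemma Wset_open {X : Type*} [TopologicalSpace X] (γ : DirFam X) {A : Set X} (hA : A ∈ γ.sets)
    (f : C(X, ℝ)) (ε : ℝ) : γ.top.IsOpen (Wset f A ε) := by
  rintro g ⟨δ, hδ, hsub⟩
  refine ⟨A, hA, δ / 2, by linarith, ?_⟩
  intro h hh
  refine ⟨δ / 2, by linarith, ?_⟩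
  intro k hk
  apply hsub
  intro x hx
  have h1 := hh x hx
  have h2 := hk x hx
  calc |g x - k x| = |(g x - h x) + (h x - k x)| := by ring_nf
    _ ≤ |g x - h x| + |h x - k x| := abs_add_le _ _
    _ < δ := by linarith

lemma mem_Wset_self {X : Type*} [TopologicalSpace X] (f : C(X, ℝ)) (A : Set X) {ε : ℝ}
    (hε : 0 < ε) : f ∈ Wset f A ε :=
  ⟨ε, hε, subset_rfl⟩

lemma Wset_subset {X : Type*} [TopologicalSpace X] (f : C(X, ℝ)) (A : Set X) (ε : ℝ) :
    Wset f A ε ⊆ Vset f A ε := by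
  rintro g ⟨δ, hδ, hsub⟩
  exact hsub (fun x _ => by simpa using hδ)

/-- `α ∨ β = {A ∪ B : A ∈ α, B ∈ β}` is directed and `C_{α∨β}` is the
supremum of `{C_α, C_β}` in `𝒰_X`. -/
theorem stmt2 {X : Type*} [TopologicalSpace X] [T2Space X] [CompletelyRegularSpace X]
    (α β : DirFam X) :
    (∀ A ∈ Set.image2 (· ∪ ·) α.sets β.sets, ∀ B ∈ Set.image2 (· ∪ ·) α.sets β.sets,
        ∃ E ∈ Set.image2 (· ∪ ·) α.sets β.sets, A ∪ B ⊆ E) ∧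
      ∀ j : DirFam X, j.sets = Set.image2 (· ∪ ·) α.sets β.sets →
        tle α.top j.top ∧ tle β.top j.top ∧
          ∀ t ∈ UX X, tle α.top t → tle β.top t → tle j.top t := by
  constructor
  · rintro _ ⟨A1, hA1, B1, hB1, rfl⟩ _ ⟨A2, hA2, B2, hB2, rfl⟩
    obtain ⟨Ea, hEa, ha⟩ := α.directed A1 hA1 A2 hA2
    obtain ⟨Eb, hEb, hb⟩ := β.directed B1 hB1 B2 hB2
    refine ⟨Ea ∪ Eb, Set.mem_image2_of_mem hEa hEb, ?_⟩
    intro x hx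
    simp only [Set.mem_union] at *
    rcases hx with (h | h) | (h | h)
    · exact Or.inl (ha (Or.inl h))
    · exact Or.inr (hb (Or.inl h))
    · exact Or.inl (ha (Or.inr h))
    · exact Or.inr (hb (Or.inr h))
  · intro j hj
    refine ⟨?_, ?_, ?_⟩
    · intro U hU f hf
      obtain ⟨A, hA, ε, hε, hsub⟩ := hU f hf
      obtain ⟨B, hB⟩ := β.nonempty
      exact ⟨A ∪ B, hj ▸ Set.mem_image2_of_mem hA hB, ε, hε,
        (Vset_mono f Set.subset_union_left ε).trans hsub⟩
    · intro U hU f hf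
      obtain ⟨B, hB, ε, hε, hsub⟩ := hU f hf
      obtain ⟨A, hA⟩ := α.nonempty
      exact ⟨A ∪ B, hj ▸ Set.mem_image2_of_mem hA hB, ε, hε,
        (Vset_mono f Set.subset_union_right ε).trans hsub⟩
    · rintro t ⟨γ, rfl⟩ hα hβ U hU f hf
      obtain ⟨C, hC, ε, hε, hsub⟩ := hU f hf
      rw [hj] at hC
      obtain ⟨A, hA, B, hB, rfl⟩ := hC
      have hWa : γ.top.IsOpen (Wset f A ε) := hα _ (Wset_open α hA f ε)
      have hWb : γ.top.IsOpen (Wset f B ε) := hβ _ (Wset_open β hB f ε)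
      have hopen : γ.top.IsOpen (Wset f A ε ∩ Wset f B ε) := γ.top.isOpen_inter _ _ hWa hWb
      obtain ⟨D, hD, δ, hδ, hsub'⟩ := hopen f ⟨mem_Wset_self f A hε, mem_Wset_self f B hε⟩
      refine ⟨D, hD, δ, hδ, fun g hg => hsub ?_⟩
      obtain ⟨h1, h2⟩ := hsub' hg
      have h1' := Wset_subset f A ε h1
      have h2' := Wset_subset f B ε h2
      intro x hx
      rcases hx with hx | hx
      · exact h1' x hx
      · exact h2' x hx
end

section
/- For any Tychonoff space X, the partially ordered set 𝒰_X of uniform topologies on C(X), ordered by inclusion, is a complete lattice: every subset of 𝒰_X has a supremum and an infimum in 𝒰_X. -/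
open Set TopologicalSpace

/-- The "strict ball": functions uniformly bounded away from `ε` from `f` on `A`. -/
def Bset {X : Type*} [TopologicalSpace X] (f : C(X, ℝ)) (A : Set X) (ε : ℝ) : Set C(X, ℝ) :=
  {g | ∃ δ > 0, ∀ x ∈ A, |f x - g x| < ε - δ}

lemma Bset_open {X : Type*} [TopologicalSpace X] (γ : DirFam X) (f : C(X, ℝ)) {A : Set X}
    (hA : A ∈ γ.sets) (ε : ℝ) : γ.top.IsOpen (Bset f A ε) := by
  rintro g ⟨δ, hδ, hg⟩
  refine ⟨A, hA, δ / 2, by positivity, fun h hh => ⟨δ / 2, by positivity, fun x hx => ?_⟩⟩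
  have h1 := hg x hx
  have h2 := hh x hx
  have := abs_sub_le (f x) (g x) (h x)
  linarith

/-- The directed family of finite unions of members of `G`. -/
def supFam {X : Type*} (G : Set (Set X)) : DirFam X where
  sets := {A | ∃ F : Finset (Set X), ↑F ⊆ G ∧ A = ⋃₀ ↑F}
  nonempty := ⟨∅, ∅, by simp, by simp⟩
  directed := by
    classical
    rintro A ⟨F₁, h₁, rfl⟩ B ⟨F₂, h₂, rfl⟩
    refine ⟨⋃₀ ↑(F₁ ∪ F₂), ⟨F₁ ∪ F₂, ?_, rfl⟩, ?_⟩
    · rw [Finset.coe_union]; exact Set.union_subset h₁ h₂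
    · rw [Finset.coe_union, Set.sUnion_union]

lemma sup_ex {X : Type*} [TopologicalSpace X] (T : Set (TopologicalSpace C(X, ℝ)))
    (hT : T ⊆ UX X) :
    ∃ t ∈ UX X, (∀ s ∈ T, tle s t) ∧ ∀ u ∈ UX X, (∀ s ∈ T, tle s u) → tle t u := by
  set G : Set (Set X) := {A | ∃ γ : DirFam X, γ.top ∈ T ∧ A ∈ γ.sets} with hG
  refine ⟨(supFam G).top, ⟨supFam G, rfl⟩, ?_, ?_⟩
  · -- upper bound
    intro s hs U hU
    obtain ⟨γ, rfl⟩ := hT hs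
    intro f hf
    obtain ⟨A, hA, ε, hε, hV⟩ := hU f hf
    refine ⟨A, ⟨{A}, ?_, by simp⟩, ε, hε, hV⟩
    intro B hB
    simp only [Finset.coe_singleton, Set.mem_singleton_iff] at hB
    exact hB ▸ ⟨γ, hs, hA⟩
  · -- least
    rintro u hu hub U hU
    obtain ⟨δf, rfl⟩ := hu
    have key : U = ⋃₀ {W | δf.top.IsOpen W ∧ W ⊆ U} := by
      apply Set.Subset.antisymm
      · intro f hf
        obtain ⟨A, ⟨F, hFG, rfl⟩, ε, hε, hV⟩ := hU f hf
        refine ⟨⋂ B ∈ F, Bset f B ε, ⟨?_, ?_⟩, ?_⟩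
        · letI := δf.top
          apply isOpen_biInter_finset
          intro B hB
          obtain ⟨γ', hγ'T, hBγ'⟩ := hFG hB
          exact hub γ'.top hγ'T _ (Bset_open γ' f hBγ' ε)
        · intro g hg
          refine hV fun x hx => ?_
          obtain ⟨B, hBF, hxB⟩ := hx
          obtain ⟨δ, hδ, h⟩ := Set.mem_iInter₂.1 hg B hBF
          have := h x hxB
          linarith
        · refine Set.mem_iInter₂.2 fun B _ => ⟨ε / 2, by positivity, fun x _ => ?_⟩
          simp only [sub_self, abs_zero]
          linarith
      · rintro f ⟨W, ⟨_, hWU⟩, hfW⟩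
        exact hWU hfW
    rw [key]
    exact δf.top.isOpen_sUnion _ fun W hW => hW.1

/-- `𝒰_X`, ordered by inclusion of topologies, is a complete lattice:
every subset has a supremum and an infimum in `𝒰_X`. -/
theorem stmt4 (X : Type*) [TopologicalSpace X] [T2Space X] [CompletelyRegularSpace X]
    (S : Set (TopologicalSpace C(X, ℝ))) (hS : S ⊆ UX X) :
    (∃ t ∈ UX X, (∀ s ∈ S, tle s t) ∧ ∀ u ∈ UX X, (∀ s ∈ S, tle s u) → tle t u) ∧
      (∃ t ∈ UX X, (∀ s ∈ S, tle t s) ∧ ∀ u ∈ UX X, (∀ s ∈ S, tle u s) → tle u t) := by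
  refine ⟨sup_ex S hS, ?_⟩
  -- infimum = supremum of the set of lower bounds
  set L : Set (TopologicalSpace C(X, ℝ)) := {t ∈ UX X | ∀ s ∈ S, tle t s} with hL
  obtain ⟨t₀, ht₀, hub, hlub⟩ := sup_ex L (fun t ht => ht.1)
  refine ⟨t₀, ht₀, fun s hs => ?_, fun u hu hlow => ?_⟩
  · exact hlub s (hS hs) (fun t ht => ht.2 s hs)
  · exact hub u ⟨hu, hlow⟩
end

section
/- For a Tychonoff space X, the lattice 𝒰_X is a Boolean algebra (every element has a complement) if and only if X is finite. -/
open Set TopologicalSpace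

lemma mem_vset_self {X : Type*} [TopologicalSpace X] (f : C(X, ℝ)) (A : Set X) {ε : ℝ}
    (hε : 0 < ε) : f ∈ Vset f A ε := fun x _ => by simpa using hε

lemma isOpen_vset {X : Type*} [TopologicalSpace X] (δ : DirFam X) {A : Set X} (hA : A ∈ δ.sets)
    (hAfin : A.Finite) (f : C(X, ℝ)) (ε : ℝ) : δ.top.IsOpen (Vset f A ε) := by
  intro g hg
  rcases A.eq_empty_or_nonempty with rfl | hne
  · exact ⟨∅, hA, 1, one_pos, fun h _ x hx => absurd hx (Set.notMem_empty x)⟩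
  · obtain ⟨x₀, hx₀, hmax⟩ := Set.exists_max_image A (fun x => |f x - g x|) hAfin hne
    refine ⟨A, hA, ε - |f x₀ - g x₀|, sub_pos.mpr (hg x₀ hx₀), fun h hh x hx => ?_⟩
    have h1 := hmax x hx
    have h2 := hh x hx
    calc |f x - h x| ≤ |f x - g x| + |g x - h x| := abs_sub_le _ _ _
      _ < |f x₀ - g x₀| + (ε - |f x₀ - g x₀|) := by linarith
      _ = ε := by ring

lemma exists_greatest {X : Type*} [Finite X] (γ : DirFam X) :
    ∃ E ∈ γ.sets, ∀ A ∈ γ.sets, A ⊆ E := by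
  obtain ⟨E, hE, hmax⟩ := Set.exists_max_image γ.sets Set.ncard (Set.toFinite _) γ.nonempty
  refine ⟨E, hE, fun A hA => ?_⟩
  obtain ⟨F, hF, hsub⟩ := γ.directed A hA E hE
  have hEF : E ⊆ F := Set.subset_union_right.trans hsub
  have hEq : E = F := Set.eq_of_subset_of_ncard_le hEF (hmax F hF) (Set.toFinite _)
  exact hEq ▸ (Set.subset_union_left.trans hsub)

/-- The directed family of all finite subsets of `X`. -/
def finFam (X : Type*) : DirFam X :=
  ⟨{A | A.Finite}, ⟨∅, Set.finite_empty⟩,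
    fun A hA B hB => ⟨A ∪ B, Set.Finite.union hA hB, subset_rfl⟩⟩

/-- `𝒰_X` is a Boolean algebra (every element has a complement, i.e. some
`s ∈ 𝒰_X` whose join with it is `C_u` and whose meet with it is `C_∅`) iff `X` is finite. -/
theorem stmt6 (X : Type*) [TopologicalSpace X] [T2Space X] [CompletelyRegularSpace X] :
    (∀ t ∈ UX X, ∃ s ∈ UX X,
        (∀ u ∈ UX X, tle t u → tle s u → tle (cUnivFam X).top u) ∧
          (∀ u ∈ UX X, tle u t → tle u s → tle u (cEmptyFam X).top)) ↔ Finite X := by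
  constructor
  · -- complemented ⇒ finite
    intro h
    by_contra hfin
    haveI : Infinite X := not_finite_iff_infinite.mp hfin
    obtain ⟨s, ⟨δ, rfl⟩, hjoin, hmeet⟩ := h (finFam X).top ⟨finFam X, rfl⟩
    -- every member of δ is empty
    have hBempty : ∀ B ∈ δ.sets, B = ∅ := by
      intro B hB
      by_contra hne
      obtain ⟨y, hy⟩ := Set.nonempty_iff_ne_empty.mpr hne
      have h1 : tle (Cpt y) (finFam X).top := by
        intro U hU f hf
        obtain ⟨A, hA, ε, hε, hsub⟩ := hU f hf
        obtain rfl : A = {y} := hA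
        exact ⟨{y}, Set.finite_singleton y, ε, hε, hsub⟩
      have h2 : tle (Cpt y) δ.top := by
        intro U hU f hf
        obtain ⟨A, hA, ε, hε, hsub⟩ := hU f hf
        obtain rfl : A = {y} := hA
        refine ⟨B, hB, ε, hε, fun g hg => hsub fun x hx => ?_⟩
        rw [show x = y from hx]
        exact hg y hy
      have h3 := hmeet (Cpt y) ⟨ptFam y, rfl⟩ h1 h2
      have hW : (Cpt y).IsOpen (Vset 0 {y} 1) := by
        intro g hg
        have hgy : |(0 : C(X, ℝ)) y - g y| < 1 := hg y rfl
        refine ⟨{y}, rfl, 1 - |(0 : C(X, ℝ)) y - g y|, by linarith,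
          fun h' hh x hx => ?_⟩
        rw [show x = y from hx]
        have h4 : |g y - h' y| < 1 - |(0 : C(X, ℝ)) y - g y| := hh y rfl
        have h6 := abs_sub_le ((0 : C(X, ℝ)) y) (g y) (h' y)
        show |(0 : C(X, ℝ)) y - h' y| < 1
        linarith
      obtain ⟨A, hA, ε, hε, hsub⟩ := h3 _ hW 0 (mem_vset_self _ _ one_pos)
      obtain rfl : A = ∅ := hA
      have h5 : (ContinuousMap.const X 2) ∈ Vset 0 {y} 1 :=
        hsub fun x hx => absurd hx (Set.notMem_empty x)
      have h6 := h5 y rfl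
      norm_num at h6
    -- hence s is coarser than C_fin
    have hsle : tle δ.top (finFam X).top := by
      intro U hU f hf
      obtain ⟨B, hB, ε, hε, hsub⟩ := hU f hf
      refine ⟨∅, Set.finite_empty, ε, hε, fun g _ => hsub ?_⟩
      rw [hBempty B hB]
      exact fun x hx => absurd hx (Set.notMem_empty x)
    have hCu := hjoin (finFam X).top ⟨finFam X, rfl⟩ (fun U hU => hU) hsle
    -- the uniformly-bounded-below-1 set is C_u-open
    have hUopen : (cUnivFam X).top.IsOpen {g : C(X, ℝ) | ∃ r, r < 1 ∧ ∀ x, |g x| ≤ r} := by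
      rintro g ⟨r, hr, hg⟩
      refine ⟨Set.univ, rfl, (1 - r) / 2, by linarith,
        fun h' hh => ⟨r + (1 - r) / 2, by linarith, fun x => ?_⟩⟩
      have h1 := hh x (Set.mem_univ x)
      have h2 := hg x
      have h3 : |h' x| - |g x| ≤ |h' x - g x| := abs_sub_abs_le_abs_sub _ _
      rw [abs_sub_comm] at h3
      linarith
    obtain ⟨A, hAfin, ε, hε, hsub⟩ :=
      hCu _ hUopen 0 ⟨0, by norm_num, fun x => by simp⟩
    have hAfin' : A.Finite := hAfin
    obtain ⟨x, hx⟩ := hAfin'.infinite_compl.nonempty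
    obtain ⟨φ, hφc, hφx, hφA⟩ :=
      CompletelyRegularSpace.completely_regular x A hAfin'.isClosed hx
    have hgmem : (⟨fun y => 1 - (φ y : ℝ), by fun_prop⟩ : C(X, ℝ)) ∈ Vset 0 A ε := by
      intro y hy
      have h1 : φ y = 1 := hφA hy
      simp [h1, hε]
    obtain ⟨r, hr, hb⟩ := hsub hgmem
    have h2 := hb x
    simp [hφx] at h2
    linarith
  · -- finite ⇒ complemented
    intro hfin t ht
    obtain ⟨γ, rfl⟩ := ht
    obtain ⟨E, hE, hEmax⟩ := exists_greatest γ
    refine ⟨CSet Eᶜ, ⟨setFam Eᶜ, rfl⟩, ?_, ?_⟩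
    · -- join is C_u
      rintro u ⟨δ, rfl⟩ htu hsu U hU
      have hUnion : U = ⋃₀ {V | δ.top.IsOpen V ∧ V ⊆ U} := by
        apply Set.Subset.antisymm
        · intro f hf
          obtain ⟨A, hA, ε, hε, hsub⟩ := hU f hf
          obtain rfl : A = Set.univ := hA
          have h1 : δ.top.IsOpen (Vset f E ε) :=
            htu _ (isOpen_vset γ hE (Set.toFinite E) f ε)
          have h2 : δ.top.IsOpen (Vset f Eᶜ ε) :=
            hsu _ (isOpen_vset (setFam Eᶜ) rfl (Set.toFinite _) f ε)
          refine ⟨Vset f E ε ∩ Vset f Eᶜ ε,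
            ⟨δ.top.isOpen_inter _ _ h1 h2, fun g hg => hsub fun x _ => ?_⟩,
            mem_vset_self f E hε, mem_vset_self f Eᶜ hε⟩
          by_cases hxE : x ∈ E
          · exact hg.1 x hxE
          · exact hg.2 x hxE
        · rintro f ⟨V, ⟨_, hVU⟩, hfV⟩
          exact hVU hfV
      rw [hUnion]
      exact δ.top.isOpen_sUnion _ fun V hV => hV.1
    · -- meet is C_∅
      rintro u ⟨δ, rfl⟩ hut hus U hU f hf
      refine ⟨∅, rfl, 1, one_pos, fun g _ => ?_⟩
      obtain ⟨B, hB, ε, hε, hsub⟩ := hU f hf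
      have hV : δ.top.IsOpen (Vset f B ε) := isOpen_vset δ hB (Set.toFinite _) f ε
      obtain ⟨A, hA, ε₁, hε₁, hsub₁⟩ := hut _ hV f (mem_vset_self f B hε)
      have hAE : A ⊆ E := hEmax A hA
      haveI : DecidableEq X := Classical.decEq X
      obtain ⟨A', hA', ε₂, hε₂, hsub₂⟩ := hus _ hV f (mem_vset_self f B hε)
      obtain rfl : A' = Eᶜ := hA'
      have hBE : B ⊆ E := by
        intro x hxB
        by_contra hxE
        have hg' : (⟨fun y => if y = x then f x + ε else f y,
            continuous_of_discreteTopology⟩ : C(X, ℝ)) ∈ Vset f A ε₁ := by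
          intro y hy
          have hyx : y ≠ x := fun h => hxE (h ▸ hAE hy)
          simp [hyx, hε₁]
        have h5 := hsub₁ hg' x hxB
        simp only [ContinuousMap.coe_mk] at h5
        simp only [if_true] at h5
        rw [show f x - (f x + ε) = -ε by ring, abs_neg, abs_of_pos hε] at h5
        exact lt_irrefl ε h5
      have hBEc : B ⊆ Eᶜ := by
        intro x hxB
        by_contra hxE
        rw [Set.notMem_compl_iff] at hxE
        have hg' : (⟨fun y => if y = x then f x + ε else f y,
            continuous_of_discreteTopology⟩ : C(X, ℝ)) ∈ Vset f Eᶜ ε₂ := by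
          intro y hy
          have hyx : y ≠ x := fun h => (h ▸ hy) hxE
          simp [hyx, hε₂]
        have h5 := hsub₂ hg' x hxB
        simp only [ContinuousMap.coe_mk] at h5
        simp only [if_true] at h5
        rw [show f x - (f x + ε) = -ε by ring, abs_neg, abs_of_pos hε] at h5
        exact lt_irrefl ε h5
      have hBempty : B = ∅ := by
        ext x
        simp only [Set.mem_empty_iff_false, iff_false]
        exact fun hx => (hBEc hx) (hBE hx)
      apply hsub
      rw [hBempty]
      exact fun x hx => absurd hx (Set.notMem_empty x)
end

section
/- If a Tychonoff space Y embeds topologically into a Tychonoff space X, then there is an order-embedding of the lattice 𝒰_Y into the lattice 𝒰_X; in particular |𝒰_Y| ≤ |𝒰_X|. -/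
open Set TopologicalSpace

universe u

section Aux

variable {Z : Type*} [TopologicalSpace Z]

lemma vset_nbhd (γ : DirFam Z) (f : C(Z,ℝ)) {A : Set Z} (hA : A ∈ γ.sets)
    {ε : ℝ} (hε : 0 < ε) :
    ∃ W, γ.top.IsOpen W ∧ f ∈ W ∧ W ⊆ Vset f A ε := by
  refine ⟨{h | ∃ d > 0, Vset h A d ⊆ Vset f A ε}, ?_, ⟨ε, hε, subset_rfl⟩, ?_⟩
  · rintro h ⟨d, hd, hsub⟩
    refine ⟨A, hA, d/2, by linarith, ?_⟩
    intro k hk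
    refine ⟨d/2, by linarith, ?_⟩
    intro m hm
    refine hsub (fun y hy => ?_)
    have h1 := hk y hy
    have h2 := hm y hy
    calc |h y - m y| ≤ |h y - k y| + |k y - m y| := abs_sub_le _ _ _
      _ < d := by linarith
  · rintro h ⟨d, hd, hsub⟩
    exact hsub (fun x _ => by simpa using hd)

lemma tle_iff (γ δ : DirFam Z) :
    tle γ.top δ.top ↔ ∀ (f : C(Z,ℝ)), ∀ A ∈ γ.sets, ∀ ε > 0,
      ∃ B ∈ δ.sets, ∃ η > 0, Vset f B η ⊆ Vset f A ε := by
  constructor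
  · intro hle f A hA ε hε
    obtain ⟨W, hW, hfW, hWsub⟩ := vset_nbhd γ f hA hε
    obtain ⟨B, hB, η, hη, hsub⟩ := hle W hW f hfW
    exact ⟨B, hB, η, hη, hsub.trans hWsub⟩
  · intro h U hU f hf
    obtain ⟨A, hA, ε, hε, hsub⟩ := hU f hf
    obtain ⟨B, hB, η, hη, hsub'⟩ := h f A hA ε hε
    exact ⟨B, hB, η, hη, hsub'.trans hsub⟩

lemma tle_of_closure (γ δ : DirFam Z)
    (h : ∀ A ∈ γ.sets, ∃ B ∈ δ.sets, A ⊆ closure B) : tle γ.top δ.top := by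
  rw [tle_iff]
  intro f A hA ε hε
  obtain ⟨B, hB, hAB⟩ := h A hA
  refine ⟨B, hB, ε/2, by linarith, ?_⟩
  intro k hk x hx
  have hclosed : IsClosed {y : Z | |f y - k y| ≤ ε/2} :=
    isClosed_le ((f.continuous.sub k.continuous).abs) continuous_const
  have hBsub : B ⊆ {y : Z | |f y - k y| ≤ ε/2} := fun y hy => le_of_lt (hk y hy)
  have hx2 : x ∈ {y : Z | |f y - k y| ≤ ε/2} :=
    hclosed.closure_subset_iff.mpr hBsub (hAB hx)
  have : |f x - k x| ≤ ε/2 := hx2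
  linarith

lemma closure_of_tle [CompletelyRegularSpace Z] (γ δ : DirFam Z)
    (h : tle γ.top δ.top) : ∀ A ∈ γ.sets, ∃ B ∈ δ.sets, A ⊆ closure B := by
  intro A hA
  rw [tle_iff] at h
  obtain ⟨B, hB, η, hη, hsub⟩ := h 0 A hA 1 one_pos
  refine ⟨B, hB, fun x hx => ?_⟩
  by_contra hxcl
  obtain ⟨φ, hφc, hφx, hφK⟩ := CompletelyRegularSpace.completely_regular x
    (closure B) isClosed_closure hxcl
  set G : C(Z, ℝ) := ⟨fun y => 1 - (φ y : ℝ),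
    continuous_const.sub (continuous_induced_dom.comp hφc)⟩ with hG
  have hGB : G ∈ Vset (0 : C(Z,ℝ)) B η := by
    intro y hy
    have h1 : φ y = 1 := hφK (subset_closure hy)
    simp [hG, h1, hη]
  have h2 := hsub hGB x hx
  have hGx : G x = 1 := by simp [hG, hφx]
  rw [ContinuousMap.zero_apply, hGx] at h2
  norm_num at h2

lemma tle_push {W : Type*} [TopologicalSpace W] (g : Z → W) (hgc : Continuous g)
    (γ δ : DirFam Z) (h : tle γ.top δ.top) :
    tle (γ.push g).top (δ.push g).top := by
  rw [tle_iff] at h ⊢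
  rintro F A' ⟨A, hA, rfl⟩ ε hε
  obtain ⟨B, hB, η, hη, hsub⟩ := h (F.comp ⟨g, hgc⟩) A hA ε hε
  refine ⟨g '' B, ⟨B, hB, rfl⟩, η, hη, ?_⟩
  rintro G hG x ⟨a, ha, rfl⟩
  have hGg : (G.comp ⟨g, hgc⟩) ∈ Vset (F.comp ⟨g, hgc⟩) B η :=
    fun y hy => hG (g y) ⟨y, hy, rfl⟩
  exact hsub hGg a ha

end Aux


/-- if `Y` embeds into `X`, then there is an order-embedding of `𝒰_Y` into
`𝒰_X`; in particular `|𝒰_Y| ≤ |𝒰_X|`. -/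
theorem stmt10 {X Y : Type u} [TopologicalSpace X] [T2Space X] [CompletelyRegularSpace X]
    [TopologicalSpace Y] [T2Space Y] [CompletelyRegularSpace Y]
    (g : Y → X) (hg : Topology.IsEmbedding g) :
    (∃ ψ : ↥(UX Y) → ↥(UX X), Function.Injective ψ ∧
        ∀ s t : ↥(UX Y), tle s.1 t.1 ↔ tle (ψ s).1 (ψ t).1) ∧
      Cardinal.mk ↥(UX Y) ≤ Cardinal.mk ↥(UX X) := by
  -- key equivalence
  have key : ∀ γ δ : DirFam Y, tle γ.top δ.top ↔ tle (γ.push g).top (δ.push g).top := by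
    intro γ δ
    constructor
    · exact tle_push g hg.continuous γ δ
    · intro h
      apply tle_of_closure
      intro A hA
      obtain ⟨B', hB', hcl⟩ := closure_of_tle _ _ h (g '' A) ⟨A, hA, rfl⟩
      obtain ⟨B, hB, rfl⟩ := hB'
      refine ⟨B, hB, fun a ha => ?_⟩
      rw [hg.closure_eq_preimage_closure_image B]
      exact hcl ⟨a, ha, rfl⟩
  have ext_of : ∀ s t : TopologicalSpace C(Y,ℝ), tle s t → tle t s → s = t := by
    intro s t h1 h2
    refine TopologicalSpace.ext ?_
    funext U
    exact propext ⟨h1 U, h2 U⟩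
  have ext_of' : ∀ s t : TopologicalSpace C(X,ℝ), tle s t → tle t s → s = t := by
    intro s t h1 h2
    refine TopologicalSpace.ext ?_
    funext U
    exact propext ⟨h1 U, h2 U⟩
  set ψ : ↥(UX Y) → ↥(UX X) := fun s => ⟨(s.2.choose.push g).top, ⟨_, rfl⟩⟩ with hψ
  have hψiff : ∀ s t : ↥(UX Y), tle s.1 t.1 ↔ tle (ψ s).1 (ψ t).1 := by
    intro s t
    have hs : s.1 = s.2.choose.top := s.2.choose_spec
    have ht : t.1 = t.2.choose.top := t.2.choose_spec
    rw [hs, ht]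
    exact key _ _
  have hinj : Function.Injective ψ := by
    intro s t h
    have h1 : tle (ψ s).1 (ψ t).1 := by rw [h]; exact fun U hU => hU
    have h2 : tle (ψ t).1 (ψ s).1 := by rw [h]; exact fun U hU => hU
    have := ext_of s.1 t.1 ((hψiff s t).mpr h1) ((hψiff t s).mpr h2)
    exact Subtype.ext this
  exact ⟨⟨ψ, hinj, hψiff⟩, Cardinal.mk_le_of_injective hinj⟩
end

section
/- For any infinite set X, the collection 𝒟_X of nonempty directed families of subsets of X has cardinality 2^(2^|X|). -/
open Set TopologicalSpace

universe u


/-- for an infinite set `X`, the collection `𝒟_X` of nonempty directed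
families of subsets of `X` has cardinality `2^(2^|X|)`. -/
theorem stmt15 (X : Type u) [Infinite X] :
    Cardinal.mk ↥{α : Set (Set X) | α.Nonempty ∧ ∀ A ∈ α, ∀ B ∈ α, ∃ E ∈ α, A ∪ B ⊆ E} =
      (2 : Cardinal.{u}) ^ ((2 : Cardinal.{u}) ^ Cardinal.mk X) := by
  apply le_antisymm
  · calc Cardinal.mk ↥{α : Set (Set X) | α.Nonempty ∧ ∀ A ∈ α, ∀ B ∈ α, ∃ E ∈ α, A ∪ B ⊆ E}
        ≤ Cardinal.mk (Set (Set X)) := Cardinal.mk_subtype_le _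
      _ = (2 : Cardinal.{u}) ^ ((2 : Cardinal.{u}) ^ Cardinal.mk X) := by
          rw [Cardinal.mk_set, Cardinal.mk_set]
  · have x0 : X := Classical.arbitrary X
    set Y := ({x0}ᶜ : Set X) with hY
    have hval : Function.Injective (Subtype.val : Y → X) := Subtype.val_injective
    -- injection from Set (Set Y) into the subtype
    set g : Set (Set Y) → ↥{α : Set (Set X) | α.Nonempty ∧ ∀ A ∈ α, ∀ B ∈ α, ∃ E ∈ α, A ∪ B ⊆ E} :=
      fun S => ⟨insert Set.univ ((Set.image (Subtype.val : Y → X)) '' S),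
        ⟨Set.univ, Set.mem_insert _ _⟩,
        fun A _ B _ => ⟨Set.univ, Set.mem_insert _ _, Set.subset_univ _⟩⟩ with hg
    have hne : ∀ A : Set Y, (Subtype.val : Y → X) '' A ≠ Set.univ := by
      intro A h
      have : x0 ∈ (Subtype.val : Y → X) '' A := h ▸ Set.mem_univ x0
      obtain ⟨a, _, ha⟩ := this
      exact a.2 (ha ▸ rfl)
    have hginj : Function.Injective g := by
      intro S T h
      have h' : insert Set.univ ((Set.image (Subtype.val : Y → X)) '' S) =
          insert Set.univ ((Set.image (Subtype.val : Y → X)) '' T) :=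
        congrArg Subtype.val h
      ext A
      constructor
      · intro hA
        have : (Subtype.val : Y → X) '' A ∈
            insert Set.univ ((Set.image (Subtype.val : Y → X)) '' T) := by
          rw [← h']; exact Set.mem_insert_of_mem _ ⟨A, hA, rfl⟩
        rcases this with heq | ⟨A', hA', hAA⟩
        · exact absurd heq (hne A)
        · rwa [Set.image_injective.mpr hval hAA] at hA'
      · intro hA
        have : (Subtype.val : Y → X) '' A ∈
            insert Set.univ ((Set.image (Subtype.val : Y → X)) '' S) := by
          rw [h']; exact Set.mem_insert_of_mem _ ⟨A, hA, rfl⟩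
        rcases this with heq | ⟨A', hA', hAA⟩
        · exact absurd heq (hne A)
        · rwa [Set.image_injective.mpr hval hAA] at hA'
    have hYcard : Cardinal.mk Y = Cardinal.mk X := by
      apply Cardinal.mk_compl_of_infinite
      rw [Cardinal.mk_singleton]
      exact lt_of_lt_of_le Cardinal.one_lt_aleph0 (Cardinal.aleph0_le_mk X)
    calc (2 : Cardinal.{u}) ^ ((2 : Cardinal.{u}) ^ Cardinal.mk X)
        = Cardinal.mk (Set (Set Y)) := by rw [Cardinal.mk_set, Cardinal.mk_set, hYcard]
      _ ≤ _ := Cardinal.mk_le_of_injective hginj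
end
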